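/- Let (M, d) be a compact metric space and P a probability measure with support M. Let δ > 0 and 0 < ρ < 1, and define w(δ/2) by 1/w(δ/2) = inf_{p∈M} P(B_{δ/2}(p)). If X_1,…,X_n are i.i.d. samples from P with n ≥ w(δ/2) · log( N(M, d, δ/2) / ρ ), then with probability at least 1 − ρ the points X_1,…,X_n form a δ-net of M, i.e., every point of M is within distance δ of some X_i. -/

import Mathlib

open MeasureTheory ProbabilityTheory ENNReal

noncomputable section

/-- The covering number of a set `S` at scale `ε`, with respect to an extended
distance function `d`: the minimal cardinality of a finite set of centers whose
`ε`-balls (for `d`) cover `S`. -/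
def coveringNumber {A : Type*} (d : A → A → ℝ≥0∞) (S : Set A) (ε : ℝ) : ℝ≥0∞ :=
  ⨅ (t : Finset A) (_ : ∀ a ∈ S, ∃ c ∈ t, d a c ≤ ENNReal.ofReal ε), (t.card : ℝ≥0∞)

/-- The packing number of a set `S` at scale `ε`, with respect to an extended
distance function `d`: the maximal cardinality of a finite subset of `S` whose
points have pairwise distances `> ε`. -/
def packingNumber {A : Type*} (d : A → A → ℝ≥0∞) (S : Set A) (ε : ℝ) : ℝ≥0∞ :=
  ⨆ (t : Finset A) (_ : ↑t ⊆ S ∧ (t : Set A).Pairwise fun x y => ENNReal.ofReal ε < d x y),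
    (t.card : ℝ≥0∞)

/-- The sup-distance over `S` between two functions (this is the sup norm of the
difference of the restrictions to `S`). -/
def supDist {A E' : Type*} [PseudoEMetricSpace E'] (S : Set A) (f g : A → E') : ℝ≥0∞ :=
  ⨆ x ∈ S, edist (f x) (g x)

/-- The Hölder ball `C_B^α(Ω)`: functions whose derivatives of order `≤ ⌊α⌋` are
bounded by `B` on `Ω` and whose `⌊α⌋`-th derivative is `(α - ⌊α⌋)`-Hölder with
constant `B` on `Ω`. -/
def holderBall {k : ℕ} (Ω : Set (EuclideanSpace ℝ (Fin k))) (α B : ℝ) :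
    Set (EuclideanSpace ℝ (Fin k) → ℝ) :=
  {f | ContDiffOn ℝ (⌊α⌋₊) f Ω ∧
    (∀ i ≤ ⌊α⌋₊, ∀ x ∈ Ω, ‖iteratedFDerivWithin ℝ i f Ω x‖ ≤ B) ∧
    ∀ x ∈ Ω, ∀ y ∈ Ω,
      ‖iteratedFDerivWithin ℝ (⌊α⌋₊) f Ω x - iteratedFDerivWithin ℝ (⌊α⌋₊) f Ω y‖ ≤
        B * ‖x - y‖ ^ (α - (⌊α⌋₊ : ℝ))}

/-- The Hölder integral probability metric `d_{α,B}(μ, ν)`. -/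
def holderIPM {k : ℕ} (Ω : Set (EuclideanSpace ℝ (Fin k))) (α B : ℝ)
    (μ ν : Measure (EuclideanSpace ℝ (Fin k))) : ℝ :=
  ⨆ f ∈ holderBall Ω α B, (∫ x, f x ∂μ - ∫ x, f x ∂ν)

/-- The empirical measure of the tuple `x = (x 0, …, x (n-1))`. -/
def empMeas {T : Type*} [MeasurableSpace T] {n : ℕ} (x : Fin n → T) : Measure T :=
  (n : ℝ≥0∞)⁻¹ • ∑ i, Measure.dirac (x i)

/-- Optimal transport cost between `μ` and `ν` for the (extended) cost `c`:
infimum over couplings of the expected cost. -/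
def transportCost {T : Type*} [MeasurableSpace T] (c : T → T → ℝ≥0∞) (μ ν : Measure T) : ℝ≥0∞ :=
  ⨅ γ : {γ : Measure (T × T) // γ.map Prod.fst = μ ∧ γ.map Prod.snd = ν},
    ∫⁻ p, c p.1 p.2 ∂(γ : Measure (T × T))

/-- The Wasserstein-1 distance (for the metric of the space). -/
def W1 {T : Type*} [MeasurableSpace T] [PseudoEMetricSpace T] (μ ν : Measure T) : ℝ :=
  (transportCost (fun x y => edist x y) μ ν).toReal

/-- The Wasserstein-2 distance (ℝ≥0∞-valued). -/
def W2e {T : Type*} [MeasurableSpace T] [PseudoEMetricSpace T] (μ ν : Measure T) : ℝ≥0∞ :=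
  (transportCost (fun x y => edist x y ^ 2) μ ν) ^ (1 / 2 : ℝ)

-- Kullback–Leibler divergence `KL(ν ‖ μ)` (`∞` if the log-likelihood ratio is not integrable).
open Classical in
def klDiv' {T : Type*} [MeasurableSpace T] (ν μ : Measure T) : ℝ≥0∞ :=
  if Integrable (fun x => Real.log ((ν.rnDeriv μ x).toReal)) ν then
    ENNReal.ofReal (∫ x, Real.log ((ν.rnDeriv μ x).toReal) ∂ν)
  else ⊤

/-- `μ` satisfies a T2 (transportation) inequality with constant `c₂`:
`W₂(μ, ν) ≤ √(2 c₂ KL(ν ‖ μ))` for all probability measures `ν ≪ μ`. -/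
def SatisfiesT2 {T : Type*} [MeasurableSpace T] [PseudoEMetricSpace T]
    (μ : Measure T) (c₂ : ℝ) : Prop :=
  ∀ ν : Measure T, IsProbabilityMeasure ν → ν ≪ μ →
    W2e μ ν ≤ (2 * ENNReal.ofReal c₂ * klDiv' ν μ) ^ (1 / 2 : ℝ)

/-- The medial axis of a set: the closure of the set of points having at least two
nearest points in `S`. -/
def medialAxis {E : Type*} [MetricSpace E] (S : Set E) : Set E :=
  closure {x | ∃ p ∈ S, ∃ q ∈ S,
    p ≠ q ∧ dist x p = Metric.infDist x S ∧ dist x q = Metric.infDist x S}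

/-- The reach of a set: the distance from `S` to its medial axis. -/
def reach {E : Type*} [MetricSpace E] (S : Set E) : ℝ≥0∞ :=
  ⨅ x ∈ medialAxis S, EMetric.infEdist x S

/-- A piecewise-smooth curve `γ : [0,1] → E`. -/
def PiecewiseSmooth {E : Type*} [NormedAddCommGroup E] [NormedSpace ℝ E] (γ : ℝ → E) : Prop :=
  ∃ (m : ℕ) (t : Fin (m + 1) → ℝ), Monotone t ∧ t 0 = 0 ∧ t (Fin.last m) = 1 ∧
    ∀ k : Fin m, ContDiffOn ℝ (⊤ : ℕ∞) γ (Set.Icc (t k.castSucc) (t k.succ))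

/-- The geodesic (intrinsic) distance in `M`: the infimum of lengths of piecewise
smooth curves joining `p` to `q` inside `M`. -/
def geodesicDist {E : Type*} [NormedAddCommGroup E] [NormedSpace ℝ E] (M : Set E)
    (p q : E) : ℝ≥0∞ :=
  ⨅ (γ : ℝ → E) (_ : γ 0 = p ∧ γ 1 = q ∧ (∀ t ∈ Set.Icc (0 : ℝ) 1, γ t ∈ M) ∧
    PiecewiseSmooth γ), eVariationOn γ (Set.Icc 0 1)

/-- `M` is geodesically convex: the infimum defining the geodesic distance is
attained for every pair of points. -/
def GeodesicallyConvex {E : Type*} [NormedAddCommGroup E] [NormedSpace ℝ E] (M : Set E) : Prop :=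
  ∀ p ∈ M, ∀ q ∈ M, ∃ γ : ℝ → E, γ 0 = p ∧ γ 1 = q ∧
    (∀ t ∈ Set.Icc (0 : ℝ) 1, γ t ∈ M) ∧ PiecewiseSmooth γ ∧
    eVariationOn γ (Set.Icc 0 1) = geodesicDist M p q

/-- The intrinsic diameter of `M`. -/
def intrinsicDiameter {E : Type*} [NormedAddCommGroup E] [NormedSpace ℝ E] (M : Set E) : ℝ≥0∞ :=
  ⨆ p ∈ M, ⨆ q ∈ M, geodesicDist M p q

/-- `M ⊆ ℝ^D` is a `d`-dimensional smooth submanifold: locally, `M` is the zero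
set of a smooth submersion into `ℝ^(D-d)`. -/
def IsSmoothSubmanifold {D : ℕ} (d : ℕ) (M : Set (EuclideanSpace ℝ (Fin D))) : Prop :=
  ∀ x ∈ M, ∃ (U : Set (EuclideanSpace ℝ (Fin D)))
    (f : EuclideanSpace ℝ (Fin D) → EuclideanSpace ℝ (Fin (D - d))),
    IsOpen U ∧ x ∈ U ∧ ContDiffOn ℝ (⊤ : ℕ∞) f U ∧
    (∀ y ∈ U, Function.Surjective (fderivWithin ℝ f U y)) ∧
    M ∩ U = U ∩ f ⁻¹' {0}

/-- `ω_d`: the volume of the Euclidean unit ball in `ℝ^d`. -/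
def unitBallVol (d : ℕ) : ℝ := (volume (Metric.ball (0 : EuclideanSpace ℝ (Fin d)) 1)).toReal

/-- `vol M`: the `d`-dimensional volume (Hausdorff measure) of `M`. -/
def mfldVol {D : ℕ} (d : ℕ) (M : Set (EuclideanSpace ℝ (Fin D))) : ℝ := (μH[(d : ℝ)] M).toReal

/-- `S` has doubling dimension `d`: every ball in `S` can be covered by `2^d`
balls of half the radius. -/
def HasDoublingDimension {E : Type*} [PseudoMetricSpace E] (S : Set E) (d : ℕ) : Prop :=
  ∀ x ∈ S, ∀ r : ℝ, 0 < r → ∃ t : Finset E, t.card ≤ 2 ^ d ∧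
    Metric.ball x r ∩ S ⊆ ⋃ c ∈ t, Metric.ball c (r / 2)

/-- Shortest-path distance between vertices `i` and `j` in the geometric graph on
`x 0, …, x (n-1)` with connectivity radius `ε` and Euclidean edge weights. -/
def graphDist {E : Type*} [PseudoMetricSpace E] {n : ℕ} (x : Fin n → E) (ε : ℝ)
    (i j : Fin n) : ℝ≥0∞ :=
  ⨅ (m : ℕ) (p : Fin (m + 1) → Fin n)
    (_ : p 0 = i ∧ p (Fin.last m) = j ∧
      ∀ k : Fin m, dist (x (p k.castSucc)) (x (p k.succ)) ≤ ε),
    ∑ k : Fin m, edist (x (p k.castSucc)) (x (p k.succ))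

/-- Graph distance extended to arbitrary points of the ambient space via projection
to a nearest vertex. -/
def graphDistExt {E : Type*} [PseudoMetricSpace E] {n : ℕ} (x : Fin n → E) (ε : ℝ)
    (p q : E) : ℝ≥0∞ :=
  ⨅ (i : Fin n) (_ : ∀ k, dist p (x i) ≤ dist p (x k))
    (j : Fin n) (_ : ∀ k, dist q (x j) ≤ dist q (x k)),
    edist p (x i) + graphDist x ε i j + edist q (x j)

end

/-! Cover the space by `N = N(M, d, δ/2)` balls of radius `δ/2`. Each has mass at least
`α = inf_p P(B_{δ/2}(p))`, so by independence all `n` samples miss a given one with probability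
at most `(1 - α)^n ≤ exp(-α n) ≤ ρ / N`. By the union bound, with probability at least `1 - ρ`
every ball contains a sample, and then every point lies within `δ/2 + δ/2` of a sample. -/

open Metric

theorem exists_finset_card_eq_coveringNumber {A : Type*} [PseudoMetricSpace A] {S : Set A}
    (hS : IsCompact S) {ε : ℝ} (hε : 0 < ε) :
    ∃ t : Finset A, (∀ a ∈ S, ∃ c ∈ t, dist a c ≤ ε) ∧
      (t.card : ℝ≥0∞) = coveringNumber (fun x y => edist x y) S ε := by
  let Cover := {t : Finset A // ∀ a ∈ S, ∃ c ∈ t, dist a c ≤ ε}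
  have : Nonempty Cover := by
    obtain ⟨s, -, hs, hcover⟩ := hS.finite_cover_balls hε
    refine ⟨hs.toFinset, fun a ha => ?_⟩
    obtain ⟨c, hc, hac⟩ := Set.mem_iUnion₂.mp (hcover ha)
    exact ⟨c, hs.mem_toFinset.mpr hc, (mem_ball.mp hac).le⟩
  obtain ⟨t, ht⟩ := ciInf_mem fun t : Cover => t.1.card
  have hmin (u : Cover) : t.1.card ≤ u.1.card := ht.trans_le (ciInf_le (OrderBot.bddBelow _) u)
  refine ⟨t.1, t.2, le_antisymm ?_ ?_⟩
  · refine le_iInf₂ fun u hu => Nat.cast_le.mpr (hmin ⟨u, ?_⟩)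
    simpa [edist_le_ofReal hε.le] using hu
  · exact iInf₂_le t.1 (by simpa [edist_le_ofReal hε.le] using t.2)

theorem exists_dist_le_add_of_cover {A ι : Type*} [PseudoMetricSpace A] {t : Finset A} {r s : ℝ}
    (ht : ∀ p, ∃ c ∈ t, dist p c ≤ r) {x : ι → A} (hx : ∀ c ∈ t, ∃ i, x i ∈ ball c s) (p : A) :
    ∃ i, dist p (x i) ≤ r + s := by
  obtain ⟨c, hc, hpc⟩ := ht p
  obtain ⟨i, hi⟩ := hx c hc
  exact ⟨i, (dist_triangle_right p (x i) c).trans (add_le_add hpc (mem_ball.mp hi).le)⟩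

theorem Real.mul_one_sub_pow_le_of_log_div_le {k a ρ : ℝ} {n : ℕ} (hk : 0 ≤ k) (ha : a ≤ 1)
    (hρ : 0 < ρ) (h : Real.log (k / ρ) ≤ a * n) : k * (1 - a) ^ n ≤ ρ := by
  rcases hk.eq_or_lt with rfl | hk
  · simpa using hρ.le
  calc k * (1 - a) ^ n ≤ k * Real.exp (-a) ^ n := by
        gcongr
        exact Real.one_sub_le_exp_neg a
    _ = k * Real.exp (-(a * n)) := by rw [← Real.exp_nat_mul]; ring_nf
    _ ≤ k * Real.exp (-Real.log (k / ρ)) := by gcongr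
    _ = ρ := by rw [Real.exp_neg, Real.exp_log (by positivity)]; field_simp

theorem ENNReal.natCast_mul_one_sub_pow_le_of_inv_mul_log_le {α : ℝ≥0∞} (hα : α ≤ 1)
    {k n : ℕ} {ρ : ℝ} (hρ : 0 < ρ) (h : α⁻¹ * ENNReal.ofReal (Real.log (k / ρ)) ≤ n) :
    (k : ℝ≥0∞) * (1 - α) ^ n ≤ ENNReal.ofReal ρ := by
  lift α to NNReal using ne_top_of_le_ne_top one_ne_top hα
  -- No `α ≠ 0` is needed: `0⁻¹ = ∞` makes `h` force `log (k / ρ) ≤ 0` in that case.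
  have hlog : Real.log (k / ρ) ≤ α * n := by
    rw [← ENNReal.div_eq_inv_mul,
      ENNReal.div_le_iff_le_mul (.inr (natCast_ne_top n)) (.inl coe_ne_top),
      ENNReal.ofReal_le_iff_le_toReal (by finiteness)] at h
    simpa [mul_comm] using h
  have hreal :=
    Real.mul_one_sub_pow_le_of_log_div_le k.cast_nonneg (a := α) (by exact_mod_cast hα) hρ hlog
  rw [← ENNReal.ofReal_toReal (a := _ * _) (by finiteness)]
  refine ENNReal.ofReal_le_ofReal ?_
  simpa [ENNReal.toReal_sub_of_le hα one_ne_top] using hreal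

section Sampling

variable {Ω T ι : Type*} [MeasurableSpace Ω] [MeasurableSpace T] [Fintype ι]
  {Pr : Measure Ω} {P : Measure T} {X : ι → Ω → T}

theorem measure_forall_mem_eq_pow (hmeas : ∀ i, Measurable (X i)) (hindep : iIndepFun X Pr)
    (hid : ∀ i, Pr.map (X i) = P) {s : Set T} (hs : MeasurableSet s) :
    Pr {ω | ∀ i, X i ω ∈ s} = P s ^ Fintype.card ι := by
  have hXi (i : ι) : Pr {ω | X i ω ∈ s} = P s := by
    rw [← hid i, Measure.map_apply (hmeas i) hs]; rfl
  rw [← Set.iInter_ofPred,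
    hindep.meas_iInter (s := fun i => {ω | X i ω ∈ s}) fun _ => ⟨s, hs, rfl⟩]
  simp [hXi]

theorem measure_exists_forall_notMem_le [IsProbabilityMeasure P]
    (hmeas : ∀ i, Measurable (X i)) (hindep : iIndepFun X Pr)
    (hid : ∀ i, Pr.map (X i) = P) (t : Finset T) {s : T → Set T} (hs : ∀ c, MeasurableSet (s c))
    {α : ℝ≥0∞} (hα : ∀ c ∈ t, α ≤ P (s c)) :
    Pr {ω | ∃ c ∈ t, ∀ i, X i ω ∉ s c} ≤ t.card * (1 - α) ^ Fintype.card ι := by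
  have : {ω | ∃ c ∈ t, ∀ i, X i ω ∉ s c} = ⋃ c ∈ t, {ω | ∀ i, X i ω ∈ (s c)ᶜ} := by ext; simp
  rw [this]
  calc _ ≤ ∑ c ∈ t, Pr {ω | ∀ i, X i ω ∈ (s c)ᶜ} := measure_biUnion_finset_le _ _
    _ ≤ ∑ c ∈ t, (1 - α) ^ Fintype.card ι := by
      refine Finset.sum_le_sum fun c hc => ?_
      rw [measure_forall_mem_eq_pow hmeas hindep hid (hs c).compl]
      exact pow_le_pow_left₀ bot_le (prob_compl_le_one_sub_of_le_prob (hα c hc) (hs c)) _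
    _ = _ := by rw [Finset.sum_const, nsmul_eq_mul]

end Sampling

theorem samples_form_net_general
    {T : Type*} [MetricSpace T] [CompactSpace T] [MeasurableSpace T] [BorelSpace T]
    (P : Measure T) [IsProbabilityMeasure P]
    (δ ρ : ℝ) (hδ : 0 < δ) (hρ0 : 0 < ρ)
    {Ω' : Type*} [MeasurableSpace Ω'] (Pr : Measure Ω') [IsProbabilityMeasure Pr]
    (n : ℕ) (X : Fin n → Ω' → T)
    (hmeas : ∀ i, Measurable (X i))
    (hindep : iIndepFun X Pr)
    (hid : ∀ i, Measure.map (X i) Pr = P)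
    (hn : (⨅ p : T, P (Metric.ball p (δ / 2)))⁻¹ *
        ENNReal.ofReal (Real.log
          ((coveringNumber (fun x y => edist x y) (Set.univ : Set T) (δ / 2)).toReal / ρ)) ≤
        (n : ℝ≥0∞)) :
    ENNReal.ofReal (1 - ρ) ≤ Pr {ω | ∀ p : T, ∃ i, dist p (X i ω) ≤ δ} := by
  rcases isEmpty_or_nonempty T with hT | ⟨⟨p₀⟩⟩
  · simpa using hρ0.le
  obtain ⟨t, ht_cover, ht_card⟩ :=
    exists_finset_card_eq_coveringNumber (isCompact_univ (X := T)) (half_pos hδ)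
  set unvisited := {ω | ∃ c ∈ t, ∀ i, X i ω ∉ ball c (δ / 2)}
  have h_unvisited : Pr unvisited ≤ ENNReal.ofReal ρ := by
    refine (measure_exists_forall_notMem_le hmeas hindep hid t (fun c => measurableSet_ball)
      fun c _ => iInf_le _ c).trans ?_
    rw [Fintype.card_fin]
    refine ENNReal.natCast_mul_one_sub_pow_le_of_inv_mul_log_le
      ((iInf_le _ p₀).trans prob_le_one) hρ0 ?_
    simpa [← ht_card] using hn
  have h_net : Set.univ \ unvisited ⊆ {ω | ∀ p : T, ∃ i, dist p (X i ω) ≤ δ} := by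
    intro ω hω p
    have h_visited : ∀ c ∈ t, ∃ i, X i ω ∈ ball c (δ / 2) := by
      simpa [unvisited, -mem_ball] using hω
    simpa only [add_halves] using
      exists_dist_le_add_of_cover (fun p => ht_cover p trivial) h_visited p
  calc ENNReal.ofReal (1 - ρ) = Pr Set.univ - ENNReal.ofReal ρ := by
        rw [measure_univ, ENNReal.ofReal_sub _ hρ0.le, ENNReal.ofReal_one]
    _ ≤ Pr Set.univ - Pr unvisited := by gcongr
    _ ≤ Pr (Set.univ \ unvisited) := le_measure_sdiff
    _ ≤ _ := measure_mono h_net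

/-- With probability at least `1 − ρ`, `n` i.i.d. samples from a
fully supported measure on a compact metric space form a `δ`-net, provided
`n ≥ w(δ/2) log(N(M, d, δ/2)/ρ)`. -/
theorem samples_form_net
    {T : Type*} [MetricSpace T] [CompactSpace T] [MeasurableSpace T] [BorelSpace T]
    (P : Measure T) [IsProbabilityMeasure P]
    (hsupp : ∀ U : Set T, IsOpen U → U.Nonempty → 0 < P U)
    (δ ρ : ℝ) (hδ : 0 < δ) (hρ0 : 0 < ρ) (hρ1 : ρ < 1)
    {Ω' : Type*} [MeasurableSpace Ω'] (Pr : Measure Ω') [IsProbabilityMeasure Pr]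
    (n : ℕ) (X : Fin n → Ω' → T)
    (hmeas : ∀ i, Measurable (X i))
    (hindep : iIndepFun X Pr)
    (hid : ∀ i, Measure.map (X i) Pr = P)
    (hn : (⨅ p : T, P (Metric.ball p (δ / 2)))⁻¹ *
        ENNReal.ofReal (Real.log
          ((coveringNumber (fun x y => edist x y) (Set.univ : Set T) (δ / 2)).toReal / ρ)) ≤
        (n : ℝ≥0∞)) :
    ENNReal.ofReal (1 - ρ) ≤ Pr {ω | ∀ p : T, ∃ i, dist p (X i ω) ≤ δ} :=
  samples_form_net_general P δ ρ hδ hρ0 Pr n X hmeas hindep hid hn
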